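/- arXiv:2205.07581 — 5 statements merged into one kernel-verified Lean document; each statement's English description precedes it below -/
import Mathlib

section
/- Fix integers r ≥ 1 and d ≥ 1. Define f_{0,0} = 1, f_{0,m} = 0 for m > 0, and for 1 ≤ l, f_{l,m} = ∑_{i=0}^{l−1} (−1)^{l−1−i} C(l−1, i) ((ri+r)^m − (ri+r−1)^m). Then for all l ≥ 1 and m ≥ 1, ∑_{j=1}^{m} r^j C(m,j) f_{l, m−j} = f_{l+1, m}. -/
-- binomial helper
lemma binom_icc (r m : ℕ) (x : ℤ) :
    ∑ j ∈ Finset.Icc 1 m, (r : ℤ) ^ j * (Nat.choose m j : ℤ) * x ^ (m - j)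
      = (x + r) ^ m - x ^ m := by
  have hset : Finset.range (m+1) = insert 0 (Finset.Icc 1 m) := by
    ext a; simp [Nat.lt_succ_iff]; omega
  have hb := add_pow (r : ℤ) x m
  rw [hset, Finset.sum_insert (by simp)] at hb
  simp only [pow_zero, Nat.sub_zero, Nat.choose_zero_right, Nat.cast_one, one_mul, mul_one] at hb
  have : (x + r) ^ m = ((r : ℤ) + x) ^ m := by ring_nf
  rw [this, hb]
  rw [show (x : ℤ)^m + ∑ j ∈ Finset.Icc 1 m, (r:ℤ)^j * x^(m-j) * (Nat.choose m j : ℤ)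
      - x^m = ∑ j ∈ Finset.Icc 1 m, (r:ℤ)^j * x^(m-j) * (Nat.choose m j : ℤ) from by ring]
  exact Finset.sum_congr rfl fun j _ => by ring

-- sign helper
lemma negpow (n i : ℕ) (h : i ≤ n) : ((-1 : ℤ)) ^ (n - i) = (-1) ^ n * (-1) ^ i := by
  have h2 : ((-1 : ℤ)) ^ (n - i) * (-1) ^ i = (-1) ^ n := by
    rw [← pow_add, Nat.sub_add_cancel h]
  have h3 : ((-1 : ℤ)) ^ i * (-1) ^ i = 1 := by
    rw [← pow_add, ← two_mul, pow_mul]; norm_num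
  calc ((-1 : ℤ)) ^ (n - i) = ((-1:ℤ)) ^ (n-i) * ((-1)^i * (-1)^i) := by rw [h3, mul_one]
    _ = (((-1:ℤ)) ^ (n-i) * (-1)^i) * (-1)^i := by ring
    _ = (-1) ^ n * (-1) ^ i := by rw [h2]

-- Pascal recurrence for alternating sums, (-1)^i form
lemma alt_pascal (k : ℕ) (g : ℕ → ℤ) :
    ∑ i ∈ Finset.range (k+2), (-1:ℤ)^i * (Nat.choose (k+1) i : ℤ) * g i
      = ∑ i ∈ Finset.range (k+1), (-1:ℤ)^i * (Nat.choose k i : ℤ) * (g i - g (i+1)) := by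
  rw [Finset.sum_range_succ']
  simp only [Nat.choose_succ_succ, Nat.cast_add, pow_succ]
  have split : ∀ i, (-1:ℤ)^i * (-1) * (((Nat.choose k i : ℤ)) + (Nat.choose k (i+1) : ℤ)) * g (i+1)
      = -((-1:ℤ)^i * (Nat.choose k i : ℤ) * g (i+1)) - ((-1:ℤ)^i * (Nat.choose k (i+1) : ℤ) * g (i+1)) := by
    intro i; ring
  simp only [split, Finset.sum_sub_distrib, Finset.sum_neg_distrib]
  simp only [mul_sub, Finset.sum_sub_distrib]
  have hB : ∑ x ∈ Finset.range (k+1), (-1:ℤ)^x * (Nat.choose k (x+1) : ℤ) * g (x+1)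
      = ∑ x ∈ Finset.range k, (-1:ℤ)^x * (Nat.choose k (x+1) : ℤ) * g (x+1) := by
    rw [Finset.sum_range_succ]; simp
  have hC : ∑ i ∈ Finset.range (k+1), (-1:ℤ)^i * (Nat.choose k i : ℤ) * g i
      = g 0 - ∑ x ∈ Finset.range k, (-1:ℤ)^x * (Nat.choose k (x+1) : ℤ) * g (x+1) := by
    rw [Finset.sum_range_succ']
    have hneg : ∀ i, (-1:ℤ)^(i+1) * (Nat.choose k (i+1) : ℤ) * g (i+1)
        = -((-1:ℤ)^i * (Nat.choose k (i+1) : ℤ) * g (i+1)) := fun i => by ring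
    simp only [hneg, Finset.sum_neg_distrib]
    simp; ring
  rw [hB, hC]; simp; ring


lemma S_rec (k : ℕ) (g : ℕ → ℤ) :
    ∑ i ∈ Finset.range (k+2), (-1:ℤ)^(k+1-i) * (Nat.choose (k+1) i : ℤ) * g i
      = ∑ i ∈ Finset.range (k+1), (-1:ℤ)^(k-i) * (Nat.choose k i : ℤ) * (g (i+1) - g i) := by
  have l1 : ∑ i ∈ Finset.range (k+2), (-1:ℤ)^(k+1-i) * (Nat.choose (k+1) i : ℤ) * g i
      = (-1:ℤ)^(k+1) * ∑ i ∈ Finset.range (k+2), (-1:ℤ)^i * (Nat.choose (k+1) i : ℤ) * g i := by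
    rw [Finset.mul_sum]
    refine Finset.sum_congr rfl fun i hi => ?_
    rw [negpow (k+1) i (by simp at hi; omega)]; ring
  have r1 : ∑ i ∈ Finset.range (k+1), (-1:ℤ)^(k-i) * (Nat.choose k i : ℤ) * (g (i+1) - g i)
      = (-1:ℤ)^(k+1) * ∑ i ∈ Finset.range (k+1), (-1:ℤ)^i * (Nat.choose k i : ℤ) * (g i - g (i+1)) := by
    rw [Finset.mul_sum]
    refine Finset.sum_congr rfl fun i hi => ?_
    rw [negpow k i (by simp at hi; omega), pow_succ]; ring
  rw [l1, r1, alt_pascal]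


/-- Entries of the transformation matrix of the f-vector under r-multichain subdivision. -/
def fMat (r l m : ℕ) : ℤ :=
  if l = 0 then (if m = 0 then 1 else 0)
  else ∑ i ∈ Finset.range l, (-1 : ℤ) ^ (l - 1 - i) * (Nat.choose (l - 1) i : ℤ) *
    (((r : ℤ) * i + r) ^ m - ((r : ℤ) * i + r - 1) ^ m)

theorem fMat_recurrence (r l m : ℕ) (hr : 1 ≤ r) (hl : 1 ≤ l) (hm : 1 ≤ m) :
    ∑ j ∈ Finset.Icc 1 m, (r : ℤ) ^ j * (Nat.choose m j : ℤ) * fMat r l (m - j)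
      = fMat r (l + 1) m := by
  obtain ⟨k, rfl⟩ : ∃ k, l = k + 1 := ⟨l - 1, by omega⟩
  have hfm : ∀ x, fMat r (k+1) x = ∑ i ∈ Finset.range (k+1),
      (-1:ℤ)^(k-i) * (Nat.choose k i : ℤ) * (((r:ℤ)*i+r)^x - ((r:ℤ)*i+r-1)^x) := by
    intro x; simp [fMat]
  have hfm2 : fMat r (k+1+1) m = ∑ i ∈ Finset.range (k+2),
      (-1:ℤ)^(k+1-i) * (Nat.choose (k+1) i : ℤ) * (((r:ℤ)*i+r)^m - ((r:ℤ)*i+r-1)^m) := by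
    simp [fMat]
  rw [hfm2, S_rec]
  simp only [hfm, Finset.mul_sum]
  rw [Finset.sum_comm]
  refine Finset.sum_congr rfl fun i _ => ?_
  have e : ∀ j, (r:ℤ)^j * (Nat.choose m j : ℤ) * ((-1:ℤ)^(k-i) * (Nat.choose k i : ℤ)
        * (((r:ℤ)*i+r)^(m-j) - ((r:ℤ)*i+r-1)^(m-j)))
      = (-1:ℤ)^(k-i) * (Nat.choose k i : ℤ) * ((r:ℤ)^j * (Nat.choose m j : ℤ) * ((r:ℤ)*i+r)^(m-j))
        - (-1:ℤ)^(k-i) * (Nat.choose k i : ℤ) * ((r:ℤ)^j * (Nat.choose m j : ℤ) * ((r:ℤ)*i+r-1)^(m-j)) := by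
    intro j; ring
  simp only [e, Finset.sum_sub_distrib, ← Finset.mul_sum]
  rw [binom_icc, binom_icc]
  push_cast
  ring
end

section
/- With A^{(0)}(d,j,m) defined as the number of r-colored permutations of [d] with ε_1 = 0, σ_d = d+1−j, ε_d = 0, and exactly m descents: A^{(0)}(d+1, k+1, m) = A^{(0)}(d+1, d+1−k, d−m) for all 0 ≤ k ≤ d and 0 ≤ m ≤ d. -/
/-! The complement `(σ, ε) ↦ (σ', ε')` with `σ'_i = d + 2 - σ_i` and `ε'_i = bar ε_i` is an
involution. At an interior position `i`, the descent indicators of a colored permutation and of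
its complement add up to `1 + [ε_i ≠ 0] - [ε_{i+1} ≠ 0]`: with equal colors exactly one of the two
is a descent because the values are reversed, and between two nonzero colors the bar map reverses
their order. When the first and last colors vanish the last position is never a descent and these
indicators telescope, so the two descent numbers add up to `d`. Since the last value `d + 1 - k`
becomes `k + 1`, the complement matches the two sets being counted. -/

/-- Number of descents of an `r`-colored permutation of `[d]` (zero-based indexing),
with the conventions σ_{d+1} = d+1, ε_{d+1} = 0: position `i` (1-based `i+1`) is a
descent iff ε_{i+1} > ε_{i+2}, or ε_{i+1} = ε_{i+2} and σ_{i+1} > σ_{i+2}; the last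
position is a descent iff its color is nonzero. -/
noncomputable def colDes (d r : ℕ) (σ : Fin d → Fin d) (ε : Fin d → Fin r) : ℕ :=
  Nat.card {i : Fin d //
    if h : i.1 + 1 < d then
      ε ⟨i.1 + 1, h⟩ < ε i ∨ (ε i = ε ⟨i.1 + 1, h⟩ ∧ σ ⟨i.1 + 1, h⟩ < σ i)
    else 0 < (ε i : ℕ)}

/-- The bar involution on colors: 0 ↦ 0 and s ↦ r - s for s ≠ 0. -/
def barColor {r : ℕ} (e : Fin r) : Fin r :=
  if h : (e : ℕ) = 0 then e else ⟨r - e.1, by have := e.isLt; omega⟩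

/-- `countA r d j s m` is the number `A^{(s)}(d, j, m)` of `r`-colored permutations
(σ, ε) of `[d]` with ε_1 = 0, σ_d = d + 1 - j, ε_d = s and exactly `m` descents. -/
noncomputable def countA (r d j s m : ℕ) : ℕ :=
  Nat.card {p : (Fin d → Fin d) × (Fin d → Fin r) //
    Function.Bijective p.1 ∧
    (∀ i : Fin d, i.1 = 0 → (p.2 i : ℕ) = 0) ∧
    (∀ i : Fin d, i.1 = d - 1 → (p.1 i : ℕ) = d - j ∧ (p.2 i : ℕ) = s) ∧
    colDes d r p.1 p.2 = m}


open Finset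

lemma barColor_val {r : ℕ} (e : Fin r) :
    (barColor e : ℕ) = if (e : ℕ) = 0 then 0 else r - e := by
  unfold barColor
  split <;> simp_all

lemma barColor_involutive {r : ℕ} : Function.Involutive (barColor (r := r)) := fun e => by
  have := e.isLt
  ext
  rw [barColor_val, barColor_val]
  split_ifs <;> omega

section Descents

variable {d r : ℕ}

def IsInteriorDescent (σ : Fin (d + 1) → Fin (d + 1)) (ε : Fin (d + 1) → Fin r) (j : Fin d) :
    Prop :=
  ε j.succ < ε j.castSucc ∨ (ε j.castSucc = ε j.succ ∧ σ j.succ < σ j.castSucc)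

instance (σ : Fin (d + 1) → Fin (d + 1)) (ε : Fin (d + 1) → Fin r) :
    DecidablePred (IsInteriorDescent σ ε) :=
  fun _ => inferInstanceAs (Decidable (_ ∨ _))

lemma colDes_eq_card_isInteriorDescent (σ : Fin (d + 1) → Fin (d + 1)) (ε : Fin (d + 1) → Fin r)
    (hlast : (ε (Fin.last d) : ℕ) = 0) :
    colDes (d + 1) r σ ε = #{j | IsInteriorDescent σ ε j} := by
  rw [card_filter, colDes, Nat.card_eq_fintype_card, Fintype.card_subtype, card_filter,
    Fin.sum_univ_castSucc]
  simp only [Fin.val_castSucc, Fin.val_last, Order.lt_add_one_iff, Order.add_one_le_iff,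
    Fin.is_lt, lt_self_iff_false, ↓reduceDIte, hlast, ↓reduceIte, add_zero]
  rfl

end Descents

section Complement

variable {r : ℕ}

def complement {n : ℕ} (p : (Fin n → Fin n) × (Fin n → Fin r)) :
    (Fin n → Fin n) × (Fin n → Fin r) :=
  (fun i => (p.1 i).rev, fun i => barColor (p.2 i))

lemma complement_involutive {n : ℕ} : Function.Involutive (complement (n := n) (r := r)) :=
  fun p => by simp [complement, barColor_involutive _]

lemma isInteriorDescent_add_isInteriorDescent_complement {d : ℕ}
    (p : (Fin (d + 1) → Fin (d + 1)) × (Fin (d + 1) → Fin r)) (hσ : Function.Injective p.1)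
    (j : Fin d) :
    ((if IsInteriorDescent p.1 p.2 j then 1 else 0) +
      (if IsInteriorDescent (complement p).1 (complement p).2 j then 1 else 0) +
      if (p.2 j.succ : ℕ) = 0 then 0 else 1 : ℕ) =
      1 + if (p.2 j.castSucc : ℕ) = 0 then 0 else 1 := by
  have := (p.2 j.succ).isLt
  have := (p.2 j.castSucc).isLt
  have := Fin.val_ne_of_ne (hσ.ne j.castSucc_lt_succ.ne)
  simp only [IsInteriorDescent, complement, Fin.lt_def, Fin.ext_iff, Fin.val_rev, barColor_val]
  split_ifs <;> omega

lemma colDes_add_colDes_complement {d : ℕ}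
    (p : (Fin (d + 1) → Fin (d + 1)) × (Fin (d + 1) → Fin r)) (hσ : Function.Injective p.1)
    (hfirst : (p.2 0 : ℕ) = 0) (hlast : (p.2 (Fin.last d) : ℕ) = 0) :
    colDes (d + 1) r p.1 p.2 + colDes (d + 1) r (complement p).1 (complement p).2 = d := by
  have hlast' : ((complement p).2 (Fin.last d) : ℕ) = 0 := by
    simp [complement, barColor_val, hlast]
  rw [colDes_eq_card_isInteriorDescent _ _ hlast, colDes_eq_card_isInteriorDescent _ _ hlast',
    card_filter, card_filter]
  have telescope : ∑ j : Fin d, (if (p.2 j.succ : ℕ) = 0 then 0 else 1) =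
      ∑ j : Fin d, if (p.2 j.castSucc : ℕ) = 0 then 0 else 1 := by
    have hsucc := Fin.sum_univ_succ fun i => if (p.2 i : ℕ) = 0 then 0 else 1
    have hcastSucc := Fin.sum_univ_castSucc fun i => if (p.2 i : ℕ) = 0 then 0 else 1
    simp only [hfirst, hlast, if_true] at hsucc hcastSucc
    omega
  have pointwise := Fintype.sum_congr _ _
    (isInteriorDescent_add_isInteriorDescent_complement p hσ)
  simp only [sum_add_distrib, sum_const, card_univ, Fintype.card_fin, smul_eq_mul, mul_one]
    at pointwise
  omega

def countASet (r n j s m : ℕ) : Set ((Fin n → Fin n) × (Fin n → Fin r)) :=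
  {p | Function.Bijective p.1 ∧
    (∀ i : Fin n, i.1 = 0 → (p.2 i : ℕ) = 0) ∧
    (∀ i : Fin n, i.1 = n - 1 → (p.1 i : ℕ) = n - j ∧ (p.2 i : ℕ) = s) ∧
    colDes n r p.1 p.2 = m}

lemma complement_mem_countASet {d k m : ℕ}
    {p : (Fin (d + 1) → Fin (d + 1)) × (Fin (d + 1) → Fin r)}
    (hp : p ∈ countASet r (d + 1) (k + 1) 0 m) :
    complement p ∈ countASet r (d + 1) (d - k + 1) 0 (d - m) := by
  obtain ⟨hbij, hfirst, hlast, rfl⟩ := hp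
  have hdes := colDes_add_colDes_complement p hbij.injective (hfirst 0 rfl)
    (hlast (Fin.last d) rfl).2
  refine ⟨Fin.rev_bijective.comp hbij, fun i hi => by simp [complement, barColor_val, hfirst i hi],
    fun i hi => ?_, by omega⟩
  obtain ⟨hσ, hε⟩ := hlast i hi
  have hσ_lt := (p.1 i).isLt
  simp only [complement, Fin.val_rev, barColor_val, hε, if_true, and_true]
  omega

end Complement

theorem countA_symmetry_zero_general (d r : ℕ) (k m : ℕ) (hk : k ≤ d) (hm : m ≤ d) :
    countA r (d + 1) (k + 1) 0 m = countA r (d + 1) (d + 1 - k) 0 (d - m) := by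
  rw [show d + 1 - k = d - k + 1 by omega]
  refine Nat.card_congr (complement_involutive.toPerm.subtypeEquiv fun p =>
    ⟨complement_mem_countASet, fun h => ?_⟩)
  have := complement_mem_countASet (p := complement p) h
  rwa [complement_involutive p, Nat.sub_sub_self hk, Nat.sub_sub_self hm] at this

theorem countA_symmetry_zero (d r : ℕ) (hr : 1 ≤ r) (k m : ℕ) (hk : k ≤ d) (hm : m ≤ d) :
    countA r (d + 1) (k + 1) 0 m = countA r (d + 1) (d + 1 - k) 0 (d - m) :=
  countA_symmetry_zero_general d r k m hk hm
end

section
/- The polynomial A_d^{(0)}(t) = ∑_{σ} t^{des(σ)}, summing over all r-colored permutations σ of [d] with ε_1 = 0 and ε_d = 0, is a symmetric (palindromic) polynomial of degree d−1: its coefficient of t^m equals its coefficient of t^{d−1−m} for all 0 ≤ m ≤ d−1. -/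
/-- Coefficient of t^m in A_d^{(0)}(t): the number of r-colored permutations of [d]
with ε_1 = 0, ε_d = 0, and exactly m descents. -/
noncomputable def countDes0 (r d m : ℕ) : ℕ :=
  Nat.card {p : (Fin d → Fin d) × (Fin d → Fin r) //
    Function.Bijective p.1 ∧
    (∀ i : Fin d, i.1 = 0 → (p.2 i : ℕ) = 0) ∧
    (∀ i : Fin d, i.1 = d - 1 → (p.2 i : ℕ) = 0) ∧
    colDes d r p.1 p.2 = m}

/-! Positions of a colored permutation are compared through the key `(ε i, σ i)` in
lexicographic order, which is injective; away from the last position, a descent is a drop of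
this key. Reversing both `σ` and `ε` preserves the conditions `ε₁ = ε_d = 0` and turns the
drops at the `d - 1` inner positions into rises and vice versa, while the last position is never
a descent because `ε_d = 0`. Hence reversal exchanges `des` with `d - 1 - des`. -/

open Finset Function

lemma Fin.forall_val_eq_zero_imp_iff {n : ℕ} {P : Fin (n + 1) → Prop} :
    (∀ i : Fin (n + 1), i.1 = 0 → P i) ↔ P 0 :=
  ⟨fun h => h 0 rfl, fun h i hi => (Fin.ext hi : i = 0) ▸ h⟩

lemma Fin.forall_val_eq_sub_one_imp_iff {n : ℕ} {P : Fin (n + 1) → Prop} :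
    (∀ i : Fin (n + 1), i.1 = n + 1 - 1 → P i) ↔ P (Fin.last n) :=
  ⟨fun h => h _ (Nat.add_sub_cancel n 1).symm, fun h i hi => (Fin.ext hi : i = Fin.last n) ▸ h⟩

section Descents

variable {α : Type*} [LinearOrder α] {n : ℕ}

def descentCount (f : Fin (n + 1) → α) : ℕ := #{i : Fin n | f i.succ < f i.castSucc}

lemma descentCount_le (f : Fin (n + 1) → α) : descentCount f ≤ n :=
  (card_filter_le _ _).trans_eq (card_fin n)

lemma descentCount_comp_rev {f : Fin (n + 1) → α} (hf : Injective f) :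
    descentCount (f ∘ Fin.rev) = n - descentCount f := by
  have ascents : descentCount (f ∘ Fin.rev) = #{i : Fin n | f i.castSucc < f i.succ} :=
    card_equiv Fin.revPerm fun i => by simp [Fin.rev_succ, Fin.rev_castSucc]
  have not_descent (i : Fin n) : f i.castSucc < f i.succ ↔ ¬ f i.succ < f i.castSucc := by
    rw [not_lt, lt_iff_le_and_ne, and_iff_left (hf.ne Fin.castSucc_lt_succ.ne)]
  have split :=
    card_filter_add_card_filter_not (s := univ) fun i : Fin n => f i.succ < f i.castSucc
  simp only [← not_descent, card_univ, Fintype.card_fin] at split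
  rw [ascents, descentCount]
  omega

end Descents

section Colored

variable {d r : ℕ}

def colKey (σ : Fin d → Fin d) (ε : Fin d → Fin r) (j : Fin d) : Fin r ×ₗ Fin d :=
  toLex (ε j, σ j)

lemma colKey_injective {σ : Fin d → Fin d} (hσ : Injective σ) (ε : Fin d → Fin r) :
    Injective (colKey σ ε) := fun _ _ h => hσ (Prod.ext_iff.mp (toLex.injective h)).2

lemma colDes_eq_descentCount {n : ℕ} (σ : Fin (n + 1) → Fin (n + 1)) {ε : Fin (n + 1) → Fin r}
    (hε : (ε (Fin.last n) : ℕ) = 0) : colDes (n + 1) r σ ε = descentCount (colKey σ ε) := by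
  classical
  rw [colDes, Nat.card_eq_fintype_card, Fintype.card_subtype, card_filter, Fin.sum_univ_castSucc,
    descentCount, card_filter]
  have succ_eq (i : Fin n) (h : i.1 + 1 < n + 1) : (⟨i.1 + 1, h⟩ : Fin (n + 1)) = i.succ := rfl
  simp [colKey, Prod.Lex.toLex_lt_toLex, hε, succ_eq, eq_comm]

lemma colDes_comp_rev {n : ℕ} {σ : Fin (n + 1) → Fin (n + 1)} {ε : Fin (n + 1) → Fin r}
    (hσ : Injective σ) (h0 : (ε 0 : ℕ) = 0) (hl : (ε (Fin.last n) : ℕ) = 0) :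
    colDes (n + 1) r (σ ∘ Fin.rev) (ε ∘ Fin.rev) = n - colDes (n + 1) r σ ε := by
  rw [colDes_eq_descentCount _ hl, colDes_eq_descentCount _ (by simpa using h0)]
  exact descentCount_comp_rev (colKey_injective hσ ε)

lemma colDes_le {n : ℕ} (σ : Fin (n + 1) → Fin (n + 1)) {ε : Fin (n + 1) → Fin r}
    (hl : (ε (Fin.last n) : ℕ) = 0) : colDes (n + 1) r σ ε ≤ n :=
  colDes_eq_descentCount σ hl ▸ descentCount_le _

def reverseColored : Equiv.Perm ((Fin d → Fin d) × (Fin d → Fin r)) :=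
  Involutive.toPerm (fun p => (p.1 ∘ Fin.rev, p.2 ∘ Fin.rev)) fun p => by
    simp [comp_def]

lemma reverseColored_apply (p : (Fin d → Fin d) × (Fin d → Fin r)) :
    reverseColored p = (p.1 ∘ Fin.rev, p.2 ∘ Fin.rev) := rfl

end Colored

theorem A0_symmetric_general (d r : ℕ) (m : ℕ) (hm : m ≤ d - 1) :
    countDes0 r d m = countDes0 r d (d - 1 - m) := by
  obtain _ | n := d
  · obtain rfl : m = 0 := by omega
    rfl
  refine Nat.card_congr (reverseColored.subtypeEquiv fun ⟨σ, ε⟩ => ?_)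
  simp only [reverseColored_apply, Fin.forall_val_eq_zero_imp_iff,
    Fin.forall_val_eq_sub_one_imp_iff, comp_apply, Fin.rev_zero, Fin.rev_last,
    Bijective.of_comp_iff _ Fin.rev_bijective]
  rw [Nat.add_sub_cancel] at hm ⊢
  constructor
  · rintro ⟨hσ, h0, hl, rfl⟩
    exact ⟨hσ, hl, h0, colDes_comp_rev hσ.injective h0 hl⟩
  · rintro ⟨hσ, hl, h0, hdes⟩
    have hle := colDes_le σ hl
    exact ⟨hσ, h0, hl, by rw [colDes_comp_rev hσ.injective h0 hl] at hdes; omega⟩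

theorem A0_symmetric (d r : ℕ) (hd : 1 ≤ d) (hr : 1 ≤ r) (m : ℕ) (hm : m ≤ d - 1) :
    countDes0 r d m = countDes0 r d (d - 1 - m) :=
  A0_symmetric_general d r m hm
end

section
/- Recurrence for colored Eulerian numbers with last color s ≠ 0: for 1 ≤ s ≤ r−1, A^{(s)}(d+1, k+1, m) = ∑_{j=k}^{d−1} A^{(s)}(d, j+1, m) + ∑_{l=1}^{s−1} ∑_{j=0}^{d−1} A^{(l)}(d, j+1, m) + ∑_{j=0}^{d−1} A^{(0)}(d, j+1, m−1) + ∑_{j=0}^{k−1} A^{(s)}(d, j+1, m−1) + ∑_{l=s+1}^{r−1} ∑_{j=0}^{d−1} A^{(l)}(d, j+1, m−1). -/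
def bigσ {e : ℕ} (p : Fin (e+2)) (f : Fin (e+1) → Fin (e+1)) : Fin (e+2) → Fin (e+2) :=
  fun i => if h : i.1 < e+1 then p.succAbove (f ⟨i.1, h⟩) else p

def bigε {r e : ℕ} (cs : Fin r) (g : Fin (e+1) → Fin r) : Fin (e+2) → Fin r :=
  fun i => if h : i.1 < e+1 then g ⟨i.1, h⟩ else cs

def deltaN (sv pv lv wv : ℕ) : ℕ :=
  if sv < lv ∨ (lv = sv ∧ pv ≤ wv) ∨ lv = 0 then 1 else 0

lemma colDes_big {r e : ℕ} (p : Fin (e+2)) (cs : Fin r) (hcs : 0 < cs.1)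
    (f : Fin (e+1) → Fin (e+1)) (g : Fin (e+1) → Fin r) :
    colDes (e+2) r (bigσ p f) (bigε cs g) =
      colDes (e+1) r f g + deltaN cs.1 p.1 (g (Fin.last e)).1 (f (Fin.last e)).1 := by
  classical
  have key : ∀ (d : ℕ) (σ : Fin d → Fin d) (ε : Fin d → Fin r),
      colDes d r σ ε = ∑ i : Fin d, if (if h : (i:ℕ)+1 < d then
        ε ⟨i.1+1,h⟩ < ε i ∨ (ε i = ε ⟨i.1+1,h⟩ ∧ σ ⟨i.1+1,h⟩ < σ i)
        else 0 < (ε i : ℕ)) then 1 else 0 := by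
    intro d σ ε
    rw [colDes, Nat.card_eq_fintype_card, Fintype.card_subtype, Finset.card_filter]
  have hgl : g ⟨e, by omega⟩ = g (Fin.last e) := rfl
  have hfl : f ⟨e, by omega⟩ = f (Fin.last e) := rfl
  set Ssum := ∑ x : Fin e, (if (if h : (x:ℕ)+1 < e+1 then
      g ⟨(x:ℕ)+1, h⟩ < g x.castSucc ∨ (g x.castSucc = g ⟨(x:ℕ)+1, h⟩ ∧ f ⟨(x:ℕ)+1, h⟩ < f x.castSucc)
      else 0 < (g x.castSucc : ℕ)) then 1 else 0) with hSsum
  have hbig : colDes (e+2) r (bigσ p f) (bigε cs g) =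
      Ssum + (if ((cs:ℕ) < (g (Fin.last e) : ℕ) ∨
        ((g (Fin.last e) : ℕ) = (cs:ℕ) ∧ (p:ℕ) ≤ (f (Fin.last e) : ℕ))) then 1 else 0) + 1 := by
    rw [key, Fin.sum_univ_castSucc, Fin.sum_univ_castSucc]
    congr 1
    · congr 1
      · rw [hSsum]
        refine Finset.sum_congr rfl ?_
        rintro ⟨xv, hx⟩ -
        simp only [bigσ, bigε, Fin.castSucc_mk, Fin.coe_castSucc, Fin.val_mk,
          dif_pos (show xv + 1 < e + 2 by omega), dif_pos (show xv + 1 < e + 1 by omega),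
          dif_pos (show xv < e + 1 by omega), Fin.succAbove_lt_succAbove_iff]
      · simp only [bigσ, bigε, Fin.coe_castSucc, Fin.val_last, Fin.val_mk,
          dif_pos (show e + 1 < e + 2 by omega), dif_neg (show ¬(e + 1 < e + 1) by omega),
          dif_pos (show e < e + 1 by omega), hgl, hfl]
        simp only [Fin.lt_succAbove_iff_le_castSucc]
        simp only [Fin.lt_def, Fin.ext_iff, Fin.le_def, Fin.coe_castSucc, Fin.val_last]
    · simp only [bigσ, bigε, Fin.val_last,
        dif_neg (show ¬(e + 1 + 1 < e + 2) by omega),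
        dif_neg (show ¬(e + 1 < e + 1) by omega)]
      rw [if_pos hcs]
  have hsmall : colDes (e+1) r f g =
      Ssum + (if 0 < (g (Fin.last e) : ℕ) then 1 else 0) := by
    rw [key, Fin.sum_univ_castSucc]
    congr 1
    all_goals
      first
        | (refine Finset.sum_congr rfl ?_; rintro ⟨xv, hx⟩ -;
           simp only [Fin.castSucc_mk, Fin.coe_castSucc, Fin.val_mk])
        | simp only [Fin.val_last, dif_neg (show ¬(e + 1 < e + 1) by omega)]
  rw [hbig, hsmall, deltaN]
  have hcs' : 0 < (cs : ℕ) := hcs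
  split_ifs <;> omega

lemma bigσ_castSucc {e : ℕ} (p : Fin (e+2)) (f : Fin (e+1) → Fin (e+1)) (j : Fin (e+1)) :
    bigσ p f j.castSucc = p.succAbove (f j) := by
  unfold bigσ
  rw [dif_pos (show (j.castSucc : ℕ) < e+1 by simp [Fin.coe_castSucc, j.isLt])]
  exact congrArg _ (congrArg f (Fin.ext rfl))

lemma bigσ_last {e : ℕ} (p : Fin (e+2)) (f : Fin (e+1) → Fin (e+1)) :
    bigσ p f (Fin.last (e+1)) = p := by
  unfold bigσ; rw [dif_neg (by simp)]

lemma bigε_castSucc {r e : ℕ} (cs : Fin r) (g : Fin (e+1) → Fin r) (j : Fin (e+1)) :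
    bigε cs g j.castSucc = g j := by
  unfold bigε
  rw [dif_pos (show (j.castSucc : ℕ) < e+1 by simp [Fin.coe_castSucc, j.isLt])]
  exact congrArg g (Fin.ext rfl)

lemma bigε_last {r e : ℕ} (cs : Fin r) (g : Fin (e+1) → Fin r) :
    bigε cs g (Fin.last (e+1)) = cs := by
  unfold bigε; rw [dif_neg (by simp)]

lemma bigσ_bijective {e : ℕ} (p : Fin (e+2)) {f : Fin (e+1) → Fin (e+1)}
    (hf : Function.Bijective f) : Function.Bijective (bigσ p f) := by
  rw [← Finite.injective_iff_bijective]
  rintro a b hab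
  unfold bigσ at hab
  have ha2 := a.isLt
  have hb2 := b.isLt
  by_cases ha : a.1 < e+1 <;> by_cases hb : b.1 < e+1
  · rw [dif_pos ha, dif_pos hb] at hab
    have h3 := hf.injective (Fin.succAbove_right_injective (p := p) hab)
    rw [Fin.mk.injEq] at h3
    exact Fin.ext h3
  · rw [dif_pos ha, dif_neg hb] at hab; exact absurd hab (Fin.succAbove_ne p _)
  · rw [dif_neg ha, dif_pos hb] at hab; exact absurd hab.symm (Fin.succAbove_ne p _)
  · exact Fin.ext (by omega)

lemma step1 (r e k s m : ℕ) (hs1 : 1 ≤ s) (hsr : s < r) (hk : k ≤ e+1) :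
    countA r (e+2) (k+1) s m =
      Nat.card {q : (Fin (e+1) → Fin (e+1)) × (Fin (e+1) → Fin r) //
        Function.Bijective q.1 ∧ (q.2 0 : ℕ) = 0 ∧
        colDes (e+1) r q.1 q.2 +
          deltaN s (e+1-k) (q.2 (Fin.last e)).1 (q.1 (Fin.last e)).1 = m} := by
  classical
  set p : Fin (e+2) := ⟨e+1-k, by omega⟩ with hp
  set cs : Fin r := ⟨s, by omega⟩ with hcs
  rw [countA]
  symm
  have hmem : ∀ q : {q : (Fin (e+1) → Fin (e+1)) × (Fin (e+1) → Fin r) //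
        Function.Bijective q.1 ∧ (q.2 0 : ℕ) = 0 ∧
        colDes (e+1) r q.1 q.2 +
          deltaN s (e+1-k) (q.2 (Fin.last e)).1 (q.1 (Fin.last e)).1 = m},
      Function.Bijective (bigσ p q.1.1) ∧
      (∀ i : Fin (e+2), i.1 = 0 → (bigε cs q.1.2 i : ℕ) = 0) ∧
      (∀ i : Fin (e+2), i.1 = (e+2) - 1 → (bigσ p q.1.1 i : ℕ) = (e+2) - (k+1) ∧
          (bigε cs q.1.2 i : ℕ) = s) ∧
      colDes (e+2) r (bigσ p q.1.1) (bigε cs q.1.2) = m := by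
    rintro ⟨⟨f, g⟩, hbij, h0, hdes⟩
    refine ⟨bigσ_bijective p hbij, ?_, ?_, ?_⟩
    · intro i hi
      have hi' : i = Fin.castSucc (0 : Fin (e+1)) := Fin.ext (by simpa using hi)
      rw [hi', bigε_castSucc]
      exact h0
    · intro i hi
      have hi' : i = Fin.last (e+1) := Fin.ext (by simpa using hi)
      rw [hi', bigσ_last, bigε_last]
      exact ⟨by show e+1-k = e+2-(k+1); omega, rfl⟩
    · rw [colDes_big p cs (show 0 < cs.1 from hs1)]
      rw [show (cs:ℕ) = s from rfl, show (p:ℕ) = e+1-k from rfl]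
      exact hdes
  refine Nat.card_eq_of_bijective
    (fun q => ⟨(bigσ p q.1.1, bigε cs q.1.2), hmem q⟩) ⟨?_, ?_⟩
  · rintro ⟨⟨f, g⟩, hq⟩ ⟨⟨f', g'⟩, hq'⟩ h
    have h' := congrArg Subtype.val h
    simp only [Prod.mk.injEq] at h'
    apply Subtype.ext
    have hf : f = f' := by
      funext j
      have := congrFun h'.1 j.castSucc
      rw [bigσ_castSucc, bigσ_castSucc] at this
      exact Fin.succAbove_right_injective (p := p) this
    have hg : g = g' := by
      funext j
      have := congrFun h'.2 j.castSucc
      rwa [bigε_castSucc, bigε_castSucc] at this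
    simp [hf, hg]
  · rintro ⟨⟨σ, ε⟩, hbij, h0, hlast, hdes⟩
    have hσlast : σ (Fin.last (e+1)) = p := by
      have := (hlast (Fin.last (e+1)) (by simp)).1
      exact Fin.ext (by rw [this]; show e+2-(k+1) = e+1-k; omega)
    have hne : ∀ j : Fin (e+1), σ j.castSucc ≠ p := by
      intro j h
      have h2 := congrArg Fin.val (hbij.injective (h.trans hσlast.symm))
      simp only [Fin.coe_castSucc, Fin.val_last] at h2
      have := j.isLt
      omega
    choose f hf using fun j => Fin.exists_succAbove_eq (hne j)
    set g : Fin (e+1) → Fin r := fun j => ε j.castSucc with hg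
    have h1 : bigσ p f = σ := by
      funext i
      induction i using Fin.lastCases with
      | last => rw [bigσ_last]; exact hσlast.symm
      | cast j => rw [bigσ_castSucc, hf]
    have h2 : bigε cs g = ε := by
      funext i
      induction i using Fin.lastCases with
      | last =>
          rw [bigε_last]
          exact Fin.ext ((hlast (Fin.last (e+1)) (by simp)).2.symm)
      | cast j => rw [bigε_castSucc]
    have hfbij : Function.Bijective f := by
      rw [← Finite.injective_iff_bijective]
      intro a b hab
      have h4 : σ a.castSucc = σ b.castSucc := by rw [← hf a, ← hf b, hab]
      exact Fin.castSucc_injective _ (hbij.injective h4)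
    have hg0 : (g 0 : ℕ) = 0 := h0 _ (by simp)
    have hcd : colDes (e+1) r f g +
        deltaN s (e+1-k) (g (Fin.last e)).1 (f (Fin.last e)).1 = m := by
      have h3 := colDes_big p cs (show 0 < cs.1 from hs1) f g
      rw [h1, h2, hdes] at h3
      rw [show (cs:ℕ) = s from rfl, show (p:ℕ) = e+1-k from rfl] at h3
      exact h3.symm
    refine ⟨⟨(f, g), hfbij, hg0, hcd⟩, Subtype.ext ?_⟩
    exact Prod.ext h1 h2

lemma natCard_fiber_sum {α β : Type*} [Finite α] [Fintype β] (f : α → β) :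
    Nat.card α = ∑ b : β, Nat.card {a // f a = b} := by
  classical
  cases nonempty_fintype α
  rw [← Nat.card_congr (Equiv.sigmaFiberEquiv f), Nat.card_eq_fintype_card,
    Fintype.card_sigma]
  exact Finset.sum_congr rfl fun b _ => (Nat.card_eq_fintype_card).symm

lemma step3 (r e k s m : ℕ) (hk : k ≤ e+1) (l : Fin r) (w : Fin (e+1)) :
    Nat.card {q : {q : (Fin (e+1) → Fin (e+1)) × (Fin (e+1) → Fin r) //
        Function.Bijective q.1 ∧ (q.2 0 : ℕ) = 0 ∧
        colDes (e+1) r q.1 q.2 +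
          deltaN s (e+1-k) (q.2 (Fin.last e)).1 (q.1 (Fin.last e)).1 = m} //
      ((q.1.2 (Fin.last e), q.1.1 (Fin.last e)) : Fin r × Fin (e+1)) = (l, w)} =
    if deltaN s (e+1-k) l.1 w.1 ≤ m then
      countA r (e+1) (e - w.1 + 1) l.1 (m - deltaN s (e+1-k) l.1 w.1) else 0 := by
  classical
  have hw : (w : ℕ) ≤ e := by have := w.isLt; omega
  by_cases hD : deltaN s (e+1-k) l.1 w.1 ≤ m
  · rw [if_pos hD, countA]
    have hmem : ∀ q : {q : {q : (Fin (e+1) → Fin (e+1)) × (Fin (e+1) → Fin r) //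
        Function.Bijective q.1 ∧ (q.2 0 : ℕ) = 0 ∧
        colDes (e+1) r q.1 q.2 +
          deltaN s (e+1-k) (q.2 (Fin.last e)).1 (q.1 (Fin.last e)).1 = m} //
        ((q.1.2 (Fin.last e), q.1.1 (Fin.last e)) : Fin r × Fin (e+1)) = (l, w)},
        Function.Bijective q.1.1.1 ∧
        (∀ i : Fin (e+1), i.1 = 0 → (q.1.1.2 i : ℕ) = 0) ∧
        (∀ i : Fin (e+1), i.1 = (e+1) - 1 →
          (q.1.1.1 i : ℕ) = (e+1) - (e - w.1 + 1) ∧ (q.1.1.2 i : ℕ) = l.1) ∧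
        colDes (e+1) r q.1.1.1 q.1.1.2 = m - deltaN s (e+1-k) l.1 w.1 := by
      rintro ⟨⟨⟨f, g⟩, hbij, h0, hsum⟩, hkey⟩
      simp only [Prod.mk.injEq] at hkey
      obtain ⟨hgl, hfl⟩ := hkey
      replace hsum : colDes (e+1) r f g +
          deltaN s (e+1-k) (g (Fin.last e)).1 (f (Fin.last e)).1 = m := hsum
      refine ⟨hbij, ?_, ?_, ?_⟩
      · intro i hi
        have : i = (0 : Fin (e+1)) := Fin.ext (by simpa using hi)
        rw [this]; exact h0
      · intro i hi
        have hil : i = Fin.last e := Fin.ext (by simpa using hi)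
        show (f i : ℕ) = e + 1 - (e - w.1 + 1) ∧ (g i : ℕ) = l.1
        rw [hil, hgl, hfl]
        exact ⟨by omega, rfl⟩
      · show colDes (e+1) r f g = m - deltaN s (e+1-k) l.1 w.1
        rw [hgl, hfl] at hsum
        omega
    refine Nat.card_eq_of_bijective (fun q => ⟨q.1.1, hmem q⟩) ⟨?_, ?_⟩
    · rintro ⟨⟨q1, hq1⟩, hk1⟩ ⟨⟨q2, hq2⟩, hk2⟩ h
      have : q1 = q2 := congrArg Subtype.val h
      exact Subtype.ext (Subtype.ext this)
    · rintro ⟨⟨f, g⟩, hbij, h0, hlast, hcd⟩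
      have hfl : f (Fin.last e) = w := by
        refine Fin.ext ?_
        have := (hlast (Fin.last e) (by simp)).1
        rw [this]; omega
      have hgl : g (Fin.last e) = l := by
        refine Fin.ext ?_
        exact (hlast (Fin.last e) (by simp)).2
      have hg0 : (g 0 : ℕ) = 0 := h0 _ rfl
      have hsum : colDes (e+1) r f g +
          deltaN s (e+1-k) (g (Fin.last e)).1 (f (Fin.last e)).1 = m := by
        rw [hgl, hfl, hcd]; omega
      exact ⟨⟨⟨(f, g), hbij, hg0, hsum⟩, by simp [hgl, hfl]⟩, rfl⟩
  · rw [if_neg hD]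
    have : IsEmpty {q : {q : (Fin (e+1) → Fin (e+1)) × (Fin (e+1) → Fin r) //
        Function.Bijective q.1 ∧ (q.2 0 : ℕ) = 0 ∧
        colDes (e+1) r q.1 q.2 +
          deltaN s (e+1-k) (q.2 (Fin.last e)).1 (q.1 (Fin.last e)).1 = m} //
        ((q.1.2 (Fin.last e), q.1.1 (Fin.last e)) : Fin r × Fin (e+1)) = (l, w)} := by
      constructor
      rintro ⟨⟨⟨f, g⟩, hbij, h0, hsum⟩, hkey⟩
      simp only [Prod.mk.injEq] at hkey
      obtain ⟨hgl, hfl⟩ := hkey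
      replace hsum : colDes (e+1) r f g +
          deltaN s (e+1-k) (g (Fin.last e)).1 (f (Fin.last e)).1 = m := hsum
      rw [hgl, hfl] at hsum
      omega
    exact Nat.card_of_isEmpty

theorem countA_recurrence_nonzero (r d s : ℕ) (hr : 2 ≤ r) (hd : 1 ≤ d)
    (hs1 : 1 ≤ s) (hs2 : s ≤ r - 1) (k m : ℕ) (hk : k ≤ d) :
    countA r (d + 1) (k + 1) s m =
      (∑ j ∈ Finset.Icc k (d - 1), countA r d (j + 1) s m) +
      (∑ l ∈ Finset.Icc 1 (s - 1), ∑ j ∈ Finset.range d, countA r d (j + 1) l m) +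
      (∑ j ∈ Finset.range d, if 1 ≤ m then countA r d (j + 1) 0 (m - 1) else 0) +
      (∑ j ∈ Finset.range k, if 1 ≤ m then countA r d (j + 1) s (m - 1) else 0) +
      (∑ l ∈ Finset.Icc (s + 1) (r - 1), ∑ j ∈ Finset.range d,
        if 1 ≤ m then countA r d (j + 1) l (m - 1) else 0) := by
  classical
  obtain ⟨e, rfl⟩ : ∃ e, d = e + 1 := ⟨d - 1, by omega⟩
  have hsr : s < r := by omega
  have hk' : k ≤ e + 1 := hk
  rw [show e + 1 + 1 = e + 2 by omega, show e + 1 - 1 = e by omega]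
  rw [step1 r e k s m hs1 hsr hk']
  rw [natCard_fiber_sum (fun q : {q : (Fin (e+1) → Fin (e+1)) × (Fin (e+1) → Fin r) //
        Function.Bijective q.1 ∧ (q.2 0 : ℕ) = 0 ∧
        colDes (e+1) r q.1 q.2 +
          deltaN s (e+1-k) (q.2 (Fin.last e)).1 (q.1 (Fin.last e)).1 = m} =>
        ((q.1.2 (Fin.last e), q.1.1 (Fin.last e)) : Fin r × Fin (e+1)))]
  rw [Fintype.sum_prod_type]
  have h3 := step3 r e k s m hk'
  simp only [h3]
  have hinner : ∀ lv : ℕ, (∑ y : Fin (e+1),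
      if deltaN s (e+1-k) lv (y:ℕ) ≤ m then
        countA r (e+1) (e - (y:ℕ) + 1) lv (m - deltaN s (e+1-k) lv (y:ℕ)) else 0) =
      ∑ j ∈ Finset.range (e+1), (if deltaN s (e+1-k) lv (e-j) ≤ m then
        countA r (e+1) (j+1) lv (m - deltaN s (e+1-k) lv (e-j)) else 0) := by
    intro lv
    rw [Fin.sum_univ_eq_sum_range (fun wv => if deltaN s (e+1-k) lv wv ≤ m then
      countA r (e+1) (e - wv + 1) lv (m - deltaN s (e+1-k) lv wv) else 0) (e+1)]
    rw [← Finset.sum_range_reflect]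
    refine Finset.sum_congr rfl fun j hj => ?_
    simp only [Finset.mem_range] at hj
    rw [show e+1-1-j = e - j by omega, show e - (e - j) + 1 = j + 1 by omega]
  simp only [hinner]
  rw [Fin.sum_univ_eq_sum_range (fun lv => ∑ j ∈ Finset.range (e+1),
    (if deltaN s (e+1-k) lv (e-j) ≤ m then
      countA r (e+1) (j+1) lv (m - deltaN s (e+1-k) lv (e-j)) else 0)) r]
  have hsplitr : ∀ H : ℕ → ℕ, ∑ lv ∈ Finset.range r, H lv =
      H 0 + (∑ lv ∈ Finset.Ico 1 s, H lv) + H s + ∑ lv ∈ Finset.Ico (s+1) r, H lv := by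
    intro H
    rw [Finset.range_eq_Ico,
      ← Finset.sum_Ico_consecutive H (show 0 ≤ s+1 by omega) (show s+1 ≤ r by omega),
      ← Finset.sum_Ico_consecutive H (show 0 ≤ s by omega) (show s ≤ s+1 by omega),
      ← Finset.sum_Ico_consecutive H (show 0 ≤ 1 by omega) (show 1 ≤ s by omega)]
    rw [show Finset.Ico 0 1 = {0} from by
        rw [Nat.Ico_zero_eq_range, Finset.range_one],
      Nat.Ico_succ_singleton, Finset.sum_singleton, Finset.sum_singleton]
  rw [hsplitr]
  beta_reduce
  have hb0 : (∑ j ∈ Finset.range (e+1), if deltaN s (e+1-k) 0 (e-j) ≤ m then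
      countA r (e+1) (j+1) 0 (m - deltaN s (e+1-k) 0 (e-j)) else 0) =
      ∑ j ∈ Finset.range (e+1), (if 1 ≤ m then countA r (e+1) (j+1) 0 (m-1) else 0) := by
    refine Finset.sum_congr rfl fun j hj => ?_
    rw [show deltaN s (e+1-k) 0 (e-j) = 1 from by
      unfold deltaN; rw [if_pos (Or.inr (Or.inr rfl))]]
  have hb2 : (∑ lv ∈ Finset.Ico 1 s, ∑ j ∈ Finset.range (e+1),
      (if deltaN s (e+1-k) lv (e-j) ≤ m then
        countA r (e+1) (j+1) lv (m - deltaN s (e+1-k) lv (e-j)) else 0)) =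
      ∑ l ∈ Finset.Icc 1 (s-1), ∑ j ∈ Finset.range (e+1), countA r (e+1) (j+1) l m := by
    rw [show Finset.Icc 1 (s-1) = Finset.Ico 1 s from by
      rw [← Finset.Ico_add_one_right_eq_Icc]; congr 1; omega]
    refine Finset.sum_congr rfl fun lv hlv => ?_
    simp only [Finset.mem_Ico] at hlv
    refine Finset.sum_congr rfl fun j hj => ?_
    rw [show deltaN s (e+1-k) lv (e-j) = 0 from by
      unfold deltaN; rw [if_neg (by omega)]]
    rw [if_pos (Nat.zero_le m), Nat.sub_zero]
  have hbs : (∑ j ∈ Finset.range (e+1), if deltaN s (e+1-k) s (e-j) ≤ m then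
      countA r (e+1) (j+1) s (m - deltaN s (e+1-k) s (e-j)) else 0) =
      (∑ j ∈ Finset.range k, if 1 ≤ m then countA r (e+1) (j+1) s (m-1) else 0) +
      ∑ j ∈ Finset.Icc k e, countA r (e+1) (j+1) s m := by
    rw [show Finset.range (e+1) = Finset.Ico 0 (e+1) from by rw [Finset.range_eq_Ico],
      ← Finset.sum_Ico_consecutive _ (Nat.zero_le k) (show k ≤ e+1 from hk')]
    congr 1
    · rw [show Finset.range k = Finset.Ico 0 k from by rw [Finset.range_eq_Ico]]
      refine Finset.sum_congr rfl fun j hj => ?_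
      simp only [Finset.mem_Ico] at hj
      rw [show deltaN s (e+1-k) s (e-j) = 1 from by
        unfold deltaN; rw [if_pos (Or.inr (Or.inl ⟨rfl, by omega⟩))]]
    · rw [show Finset.Icc k e = Finset.Ico k (e+1) from (Finset.Ico_add_one_right_eq_Icc k e).symm]
      refine Finset.sum_congr rfl fun j hj => ?_
      simp only [Finset.mem_Ico] at hj
      rw [show deltaN s (e+1-k) s (e-j) = 0 from by
        unfold deltaN; rw [if_neg (by omega)]]
      rw [if_pos (Nat.zero_le m), Nat.sub_zero]
  have hb5 : (∑ lv ∈ Finset.Ico (s+1) r, ∑ j ∈ Finset.range (e+1),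
      (if deltaN s (e+1-k) lv (e-j) ≤ m then
        countA r (e+1) (j+1) lv (m - deltaN s (e+1-k) lv (e-j)) else 0)) =
      ∑ l ∈ Finset.Icc (s+1) (r-1), ∑ j ∈ Finset.range (e+1),
        (if 1 ≤ m then countA r (e+1) (j+1) l (m-1) else 0) := by
    rw [show Finset.Icc (s+1) (r-1) = Finset.Ico (s+1) r from by
      rw [← Finset.Ico_add_one_right_eq_Icc]; congr 1; omega]
    refine Finset.sum_congr rfl fun lv hlv => ?_
    simp only [Finset.mem_Ico] at hlv
    refine Finset.sum_congr rfl fun j hj => ?_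
    rw [show deltaN s (e+1-k) lv (e-j) = 1 from by
      unfold deltaN; rw [if_pos (Or.inl (by omega))]]
  rw [hb0, hb2, hbs, hb5]
  omega
end

section
/- f-vector of the r-multichain subdivision of a simplex in low dimension (vertex count): if Δ is a (d−1)-dimensional simplicial complex with f-vector (f_{−1}, f_0, …, f_{d−1}), then the number of vertices of its r-multichain subdivision C^r(Δ) equals ∑_{l=0}^{d} (r^l − (r−1)^l) f_{l−1}(Δ). Equivalently, the number of r-multichains A_1 ⊆ A_2 ⊆ ⋯ ⊆ A_r of nonempty faces of Δ equals ∑_{l=1}^{d} (r^l − (r−1)^l) f_{l−1}(Δ). -/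
/-!
A multichain `A₁ ⊆ ⋯ ⊆ A_r` of faces is determined by its top face `F = A_r` together with the
function sending each vertex of `F` to the first index at which it enters the chain, and every
function `F → Fin r` arises. All `Aᵢ` are then faces, and they are nonempty exactly when some
vertex enters at the first index; of the `r ^ |F|` functions, `(r - 1) ^ |F|` miss that index.
Grouping the faces by size gives the formula (the empty face contributes `r⁰ - (r - 1)⁰ = 0`).
-/

open Finset

section ChainsAndFunctions

variable {α ι : Type*} [LinearOrder ι]

def sublevels {s : Finset α} (g : s → ι) (i : ι) : Finset α :=
  (s.attach.filter (g · ≤ i)).map (Function.Embedding.subtype _)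

theorem mem_sublevels {s : Finset α} {g : s → ι} {i : ι} {x : α} :
    x ∈ sublevels g i ↔ ∃ hx : x ∈ s, g ⟨x, hx⟩ ≤ i := by
  simp [sublevels]

theorem monotone_sublevels {s : Finset α} (g : s → ι) : Monotone (sublevels g) :=
  fun _ _ hij _ hx =>
    let ⟨hxs, hx⟩ := mem_sublevels.1 hx
    mem_sublevels.2 ⟨hxs, hx.trans hij⟩

variable [OrderTop ι]

theorem sublevels_top {s : Finset α} (g : s → ι) : sublevels g ⊤ = s := by
  ext x
  simp [mem_sublevels]

variable [Fintype ι] [DecidableEq α]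

def firstIndex (A : ι → Finset α) (x : α) (hx : x ∈ A ⊤) : ι :=
  ({i | x ∈ A i} : Finset ι).min' ⟨⊤, by simpa using hx⟩

theorem firstIndex_le_iff {A : ι → Finset α} (hA : Monotone A) {x : α} (hx : x ∈ A ⊤) {i : ι} :
    firstIndex A x hx ≤ i ↔ x ∈ A i := by
  refine ⟨fun h => hA h ?_, fun h => min'_le _ _ (by simpa using h)⟩
  exact (mem_filter.1 (min'_mem ({i | x ∈ A i} : Finset ι) _)).2

def monotoneEquivFun (s : Finset α) :
    {A : ι → Finset α // Monotone A ∧ A ⊤ = s} ≃ (s → ι) where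
  toFun A x := firstIndex A.1 x (A.2.2.symm ▸ x.2)
  invFun g := ⟨sublevels g, monotone_sublevels g, sublevels_top g⟩
  left_inv := by
    rintro ⟨A, hA, rfl⟩
    ext i x
    simp only [mem_sublevels, firstIndex_le_iff hA]
    exact ⟨fun ⟨_, h⟩ => h, fun h => ⟨hA le_top h, h⟩⟩
  right_inv g := by
    funext x
    refine eq_of_forall_ge_iff fun i => ?_
    rw [firstIndex_le_iff (monotone_sublevels g), mem_sublevels]
    exact ⟨fun ⟨_, h⟩ => h, fun h => ⟨x.2, h⟩⟩

theorem firstIndex_eq_bot_iff [OrderBot ι] {A : ι → Finset α} (hA : Monotone A) {x : α}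
    (hx : x ∈ A ⊤) : firstIndex A x hx = ⊥ ↔ x ∈ A ⊥ :=
  le_bot_iff.symm.trans (firstIndex_le_iff hA hx)

end ChainsAndFunctions

theorem Fintype.card_fun_exists_eq {β ι : Type*} [Fintype β] [DecidableEq β] [Fintype ι]
    [DecidableEq ι] (b : ι) :
    (Fintype.card {g : β → ι // ∃ x, g x = b} : ℤ) =
      (card ι : ℤ) ^ card β - ((card ι : ℤ) - 1) ^ card β := by
  have hmiss : card {g : β → ι // ¬∃ x, g x = b} = (card ι - 1) ^ card β := by
    rw [card_congr ((Equiv.subtypeEquivRight fun g => not_exists).trans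
        (Equiv.subtypePiEquivPi (p := fun _ c => c ≠ b))),
      card_pi, Finset.prod_const, card_subtype_compl, card_subtype_eq, Finset.card_univ]
  have hsplit := card_subtype_compl (fun g : β → ι => ∃ x, g x = b)
  rw [hmiss, card_fun] at hsplit
  have hb : 1 ≤ card ι := card_pos_iff.2 ⟨b⟩
  have hle := card_subtype_le (fun g : β → ι => ∃ x, g x = b)
  rw [card_fun] at hle
  zify [hb, hle] at hsplit
  linarith

section Multichains

variable {α ι : Type*} [LinearOrder ι] [BoundedOrder ι] {Δ : Finset (Finset α)}

def IsFaceMultichain (Δ : Finset (Finset α)) (A : ι → Finset α) : Prop :=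
  (∀ i, A i ∈ Δ ∧ A i ≠ ∅) ∧ Monotone A

theorem isFaceMultichain_and_top_eq_iff (hdown : ∀ F ∈ Δ, ∀ E ⊆ F, E ∈ Δ) {F : Finset α}
    (hF : F ∈ Δ) {A : ι → Finset α} :
    IsFaceMultichain Δ A ∧ A ⊤ = F ↔ (Monotone A ∧ A ⊤ = F) ∧ (A ⊥).Nonempty := by
  constructor
  · rintro ⟨⟨hface, hA⟩, htop⟩
    exact ⟨⟨hA, htop⟩, nonempty_iff_ne_empty.2 (hface ⊥).2⟩
  · rintro ⟨⟨hA, rfl⟩, hbot⟩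
    refine ⟨⟨fun i => ⟨hdown _ hF _ (hA le_top), ?_⟩, hA⟩, rfl⟩
    exact nonempty_iff_ne_empty.1 (hbot.mono (hA bot_le))

variable [DecidableEq α] [Fintype ι]

def multichainsWithTopEquiv (hdown : ∀ F ∈ Δ, ∀ E ⊆ F, E ∈ Δ) {F : Finset α} (hF : F ∈ Δ) :
    {A : ι → Finset α // IsFaceMultichain Δ A ∧ A ⊤ = F} ≃ {g : F → ι // ∃ x, g x = ⊥} :=
  (Equiv.subtypeEquivRight fun _ => isFaceMultichain_and_top_eq_iff hdown hF).trans <|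
    (Equiv.subtypeSubtypeEquivSubtypeInter _ _).symm.trans <|
      (monotoneEquivFun F).subtypeEquiv fun ⟨A, hA, htop⟩ => by
        subst htop
        simp only [monotoneEquivFun, Equiv.coe_fn_mk, firstIndex_eq_bot_iff hA]
        exact ⟨fun ⟨x, hx⟩ => ⟨⟨x, hA bot_le hx⟩, hx⟩, fun ⟨x, hx⟩ => ⟨x, hx⟩⟩

def multichainsEquivSigma (hdown : ∀ F ∈ Δ, ∀ E ⊆ F, E ∈ Δ) :
    {A : ι → Finset α // IsFaceMultichain Δ A} ≃ Σ F : ↥Δ, {g : F.1 → ι // ∃ x, g x = ⊥} :=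
  (Equiv.sigmaSubtypeFiberEquiv (fun A : {A // IsFaceMultichain Δ A} => A.1 ⊤) (· ∈ Δ)
      fun A => (A.2.1 ⊤).1).symm.trans <|
    Equiv.sigmaCongrRight fun F =>
      (Equiv.subtypeSubtypeEquivSubtypeInter _ _).trans (multichainsWithTopEquiv hdown F.2)

end Multichains

theorem multichain_vertex_count {V : Type*} [DecidableEq V]
    (Δ : Finset (Finset V)) (d r : ℕ) (hr : 1 ≤ r)
    (hdown : ∀ F ∈ Δ, ∀ E ⊆ F, E ∈ Δ)
    (hdim : ∀ F ∈ Δ, F.card ≤ d) :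
    (Nat.card {A : Fin r → Finset V //
        (∀ i, A i ∈ Δ ∧ A i ≠ ∅) ∧ ∀ i j : Fin r, i ≤ j → A i ⊆ A j} : ℤ) =
      ∑ l ∈ Finset.range (d + 1),
        ((r : ℤ) ^ l - ((r : ℤ) - 1) ^ l) * ((Δ.filter fun F => F.card = l).card : ℤ) := by
  have : NeZero r := ⟨by omega⟩
  have hcount : (Nat.card {A : Fin r → Finset V // IsFaceMultichain Δ A} : ℤ) =
      ∑ F ∈ Δ, ((r : ℤ) ^ F.card - ((r : ℤ) - 1) ^ F.card) := by
    rw [Nat.card_congr (multichainsEquivSigma hdown), Nat.card_eq_fintype_card,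
      Fintype.card_sigma, Nat.cast_sum, ← sum_coe_sort Δ]
    refine sum_congr rfl fun F _ => ?_
    rw [Fintype.card_fun_exists_eq, Fintype.card_fin, Fintype.card_coe]
  have hsize : ∀ F ∈ Δ, F.card ∈ range (d + 1) :=
    fun F hF => mem_range_succ_iff.2 (hdim F hF)
  rw [← sum_fiberwise_of_maps_to' hsize
    (fun l => (r : ℤ) ^ l - ((r : ℤ) - 1) ^ l)] at hcount
  simp only [sum_const, nsmul_eq_mul, mul_comm] at hcount
  exact hcount
end
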